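/- arXiv:2205.14018 — 9 statements merged into one kernel-verified Lean document; each statement's English description precedes it below -/
import Mathlib

section
/- For all natural numbers a, b, d, n, p, q with d > 0, the n-th iterate of f_{a,b,d} satisfies f_{a,b,d}^n(p·d^n + q) = p·(a·d)^{μ(q)} + f_{a,b,d}^n(q), where μ(q) = μ_{a,b,d,n}(q) is the number of indices 0 ≤ i < n such that f_{a,b,d}^i(q) is not a multiple of d. -/
/-- `f a b d m = m / d` if `d ∣ m`, else `a * m + b`. -/
def fabd (a b d : ℕ) : ℕ → ℕ := fun m => if d ∣ m then m / d else a * m + b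

/-- `μ a b d n q` counts indices `i < n` with `d ∤ f^[i] q`. -/
def muabd (a b d n q : ℕ) : ℕ :=
  ((Finset.range n).filter (fun i => ¬ d ∣ (fabd a b d)^[i] q)).card

section

variable {a b d : ℕ}

theorem fabd_of_dvd {m : ℕ} (h : d ∣ m) : fabd a b d m = m / d := if_pos h

theorem fabd_of_not_dvd {m : ℕ} (h : ¬d ∣ m) : fabd a b d m = a * m + b := if_neg h

theorem muabd_succ (n q : ℕ) :
    muabd a b d (n + 1) q = muabd a b d n (fabd a b d q) + if d ∣ q then 0 else 1 := by
  simp only [muabd, Finset.card_filter, Finset.sum_range_succ', Function.iterate_succ_apply,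
    Function.iterate_zero_apply, ite_not]
  rfl

/-- Adding a multiple of `d ^ (n + 1)` does not change divisibility by `d`, so one step of `fabd`
either divides the added term by `d` or multiplies it by `a`. -/
theorem fabd_mul_pow_succ_add (hd : 0 < d) (n p q : ℕ) :
    fabd a b d (p * d ^ (n + 1) + q) =
      p * (a * d) ^ (if d ∣ q then 0 else 1) * d ^ n + fabd a b d q := by
  have hdvd : d ∣ p * d ^ (n + 1) := Dvd.dvd.mul_left (dvd_pow_self d n.succ_ne_zero) p
  by_cases hq : d ∣ q
  · have hsum : p * d ^ (n + 1) + q = (p * d ^ n + q / d) * d := by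
      rw [add_mul, Nat.div_mul_cancel hq, pow_succ, mul_assoc]
    rw [fabd_of_dvd (hdvd.add hq), fabd_of_dvd hq, hsum, Nat.mul_div_cancel _ hd, if_pos hq]
    ring
  · rw [fabd_of_not_dvd (fun h => hq ((Nat.dvd_add_right hdvd).mp h)), fabd_of_not_dvd hq,
      if_neg hq]
    ring

end

theorem iterate_fabd_add (a b d n p q : ℕ) (hd : 0 < d) :
    (fabd a b d)^[n] (p * d ^ n + q) =
      p * (a * d) ^ (muabd a b d n q) + (fabd a b d)^[n] q := by
  induction n generalizing p q with
  | zero => simp [muabd]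
  | succ n ih =>
    rw [Function.iterate_succ_apply, Function.iterate_succ_apply, fabd_mul_pow_succ_add hd, ih,
      muabd_succ, pow_add]
    ring
end

section
/- For all natural numbers a, b, d, n, p, q with d > 0, μ_{a,b,d,n}(p·d^n + q) = μ_{a,b,d,n}(q), where μ_{a,b,d,n}(q) is the number of indices 0 ≤ i < n such that f_{a,b,d}^i(q) is not divisible by d. -/
theorem Nat.ModEq.dvd_iff_of_pow_succ {d k x y : ℕ} (h : x ≡ y [MOD d ^ (k + 1)]) :
    d ∣ x ↔ d ∣ y :=
  h.dvd_iff (dvd_pow_self d k.succ_ne_zero)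

theorem fabd_modEq_of_modEq_pow_succ (a b : ℕ) {d k x y : ℕ} (h : x ≡ y [MOD d ^ (k + 1)]) :
    fabd a b d x ≡ fabd a b d y [MOD d ^ k] := by
  unfold fabd
  by_cases hx : d ∣ x
  · have hy : d ∣ y := h.dvd_iff_of_pow_succ.mp hx
    rw [if_pos hx, if_pos hy]
    obtain ⟨x', rfl⟩ := hx
    obtain ⟨y', rfl⟩ := hy
    rcases eq_or_ne d 0 with rfl | hd
    · simp only [zero_mul, Nat.div_zero, Nat.ModEq.refl]
    rw [Nat.mul_div_cancel_left _ (Nat.pos_of_ne_zero hd),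
      Nat.mul_div_cancel_left _ (Nat.pos_of_ne_zero hd)]
    exact Nat.ModEq.mul_left_cancel' hd (by rwa [← pow_succ'])
  · have hy : ¬ d ∣ y := mt h.dvd_iff_of_pow_succ.mpr hx
    rw [if_neg hx, if_neg hy]
    rw [pow_succ] at h
    exact ((h.mul_left a).add_right b).of_mul_right d

theorem iterate_fabd_modEq (a b : ℕ) {d n x y : ℕ} (h : x ≡ y [MOD d ^ n]) {i : ℕ} (hi : i ≤ n) :
    (fabd a b d)^[i] x ≡ (fabd a b d)^[i] y [MOD d ^ (n - i)] := by
  induction i with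
  | zero => simpa using h
  | succ i ih =>
    rw [Function.iterate_succ_apply', Function.iterate_succ_apply']
    apply fabd_modEq_of_modEq_pow_succ
    rw [show n - (i + 1) + 1 = n - i by omega]
    exact ih (by omega)

theorem muabd_eq_of_modEq (a b : ℕ) {d n x y : ℕ} (h : x ≡ y [MOD d ^ n]) :
    muabd a b d n x = muabd a b d n y := by
  unfold muabd
  refine congrArg Finset.card (Finset.filter_congr fun i hi => ?_)
  have hi : i < n := Finset.mem_range.mp hi
  have hmod := iterate_fabd_modEq a b h hi.le
  rw [show n - i = n - (i + 1) + 1 by omega] at hmod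
  rw [hmod.dvd_iff_of_pow_succ]

theorem muabd_add_general (a b d n p q : ℕ) :
    muabd a b d n (p * d ^ n + q) = muabd a b d n q :=
  muabd_eq_of_modEq a b (Nat.mul_modulus_add_modEq_iff.mpr rfl)

theorem muabd_add (a b d n p q : ℕ) (hd : 0 < d) :
    muabd a b d n (p * d ^ n + q) = muabd a b d n q :=
  muabd_add_general a b d n p q
end

section
/- For all natural numbers a, b, n, p, q with a and b of the same parity, the n-th iterate of f'_{a,b} satisfies f'_{a,b}^n(p·2^n + q) = p·a^{η(q)} + f'_{a,b}^n(q), where η(q) = η_{a,b,n}(q) is the number of indices 0 ≤ i < n such that f'_{a,b}^i(q) is odd. -/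
/-- Accelerated function: `m / 2` if `m` even, `(a * m + b) / 2` if odd. -/
def fab' (a b : ℕ) : ℕ → ℕ := fun m => if Even m then m / 2 else (a * m + b) / 2

/-- `η a b n q` counts indices `i < n` with `f'^[i] q` odd. -/
def etaab (a b n q : ℕ) : ℕ :=
  ((Finset.range n).filter (fun i => Odd ((fab' a b)^[i] q))).card

theorem iterate_fab'_add (a b n p q : ℕ) (hpar : a % 2 = b % 2) :
    (fab' a b)^[n] (p * 2 ^ n + q) =
      p * a ^ (etaab a b n q) + (fab' a b)^[n] q := by
  induction n generalizing p with
  | zero => simp [etaab]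
  | succ n ih =>
    have h2 : p * 2 ^ (n + 1) + q = (2 * p) * 2 ^ n + q := by ring
    rw [Function.iterate_succ_apply', Function.iterate_succ_apply' (fab' a b) n q,
      h2, ih (2*p)]
    have heta : etaab a b (n + 1) q =
        etaab a b n q + (if Odd ((fab' a b)^[n] q) then 1 else 0) := by
      unfold etaab
      rw [Finset.range_add_one, Finset.filter_insert]
      split
      · rw [Finset.card_insert_of_notMem (by simp)]
      · simp
    set r := (fab' a b)^[n] q with hr
    set e := etaab a b n q with he
    by_cases hev : Even r
    · have hno : ¬ Odd r := by simpa using hev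
      have hno2 : ¬ Odd ((fab' a b)^[n] q) := by rw [← hr]; exact hno
      rw [heta, if_neg hno2]
      simp only [fab', add_zero]
      rw [if_pos (by exact (even_two_mul p).mul_right _ |>.add hev),
        if_pos hev]
      obtain ⟨k, hk⟩ := hev
      rw [hk]
      have : 2 * p * a ^ e + (k + k) = 2 * (p * a ^ e + k) := by ring
      rw [this, Nat.mul_div_cancel_left _ (by norm_num), ← two_mul,
        Nat.mul_div_cancel_left _ (by norm_num)]
    · have hodd : Odd r := Nat.not_even_iff_odd.mp hev
      have hodd2 : Odd ((fab' a b)^[n] q) := by rw [← hr]; exact hodd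
      rw [heta, if_pos hodd2]
      simp only [fab']
      have harb : Even (a * r + b) := by
        rcases Nat.even_or_odd a with ha | ha
        · have hb : Even b := by
            rwa [Nat.even_iff, ← hpar, ← Nat.even_iff]
          exact (ha.mul_right r).add hb
        · have hb : Odd b := by
            rwa [Nat.odd_iff, ← hpar, ← Nat.odd_iff]
          exact (ha.mul hodd).add_odd hb
      have hno : ¬ Even (2 * p * a ^ e + r) := by
        simp [Nat.even_add, hev, (even_two_mul p).mul_right (a ^ e)]
      rw [if_neg hno, if_neg (by simpa using hodd)]
      have : a * (2 * p * a ^ e + r) + b = 2 * (p * a ^ (e + 1)) + (a * r + b) := by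
        ring
      rw [this, Nat.mul_add_div (by norm_num : 0 < 2)]
end

section
/- For all natural numbers a, b, n, p, q with a and b of the same parity, η_{a,b,n}(p·2^n + q) = η_{a,b,n}(q), where η_{a,b,n}(q) counts the indices 0 ≤ i < n such that f'_{a,b}^i(q) is odd. -/
lemma fab'_iter_key (a b : ℕ) (hpar : a % 2 = b % 2) (p q n : ℕ) :
    ∀ i, i ≤ n → ∃ r, (fab' a b)^[i] (p * 2 ^ n + q) = r * 2 ^ (n - i) + (fab' a b)^[i] q := by
  intro i
  induction i with
  | zero => intro _; exact ⟨p, by simp⟩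
  | succ i ih =>
    intro hi
    obtain ⟨r, hr⟩ := ih (Nat.le_of_succ_le hi)
    rw [Function.iterate_succ_apply', Function.iterate_succ_apply', hr]
    set s := (fab' a b)^[i] q with hs
    have hk : n - i = (n - (i+1)) + 1 := by omega
    rw [hk]
    set k := n - (i+1) with hkk
    have hpow : (2:ℕ) ^ (k+1) = 2 * 2 ^ k := by ring
    have hx : Even (r * 2 ^ (k+1)) := ⟨r * 2 ^ k, by rw [hpow]; ring⟩
    by_cases hse : Even s
    · obtain ⟨t, ht⟩ := id hse
      have h1 : Even (r * 2 ^ (k+1) + s) := hx.add hse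
      refine ⟨r, ?_⟩
      simp only [fab']
      rw [if_pos h1, if_pos hse]
      have hsum : r * 2 ^ (k+1) + s = (r * 2 ^ k + t) * 2 := by
        rw [hpow, ht]; ring
      rw [hsum, Nat.mul_div_cancel _ (by norm_num)]
      omega
    · have hodd : Odd s := Nat.not_even_iff_odd.mp hse
      have heab : Even (a * s + b) := by
        rcases Nat.even_or_odd a with ha | ha
        · have hb : b % 2 = 0 := by rw [← hpar]; exact Nat.even_iff.mp ha
          have ha' := Nat.even_iff.mp ha
          refine Nat.even_iff.mpr ?_
          rw [Nat.add_mod, Nat.mul_mod, ha', hb]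
          simp
        · have hb : b % 2 = 1 := by rw [← hpar]; exact Nat.odd_iff.mp ha
          have ha' := Nat.odd_iff.mp ha
          have hs' := Nat.odd_iff.mp hodd
          refine Nat.even_iff.mpr ?_
          rw [Nat.add_mod, Nat.mul_mod, ha', hs', hb]
      obtain ⟨t, ht⟩ := heab
      have h1 : ¬ Even (r * 2 ^ (k+1) + s) := fun h =>
        hse ((Nat.even_add.mp h).mp hx)
      refine ⟨a * r, ?_⟩
      simp only [fab']
      rw [if_neg h1, if_neg hse]
      have hval : a * (r * 2 ^ (k+1) + s) + b = (a * r * 2 ^ k + t) * 2 := by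
        have h2 : a * (r * 2 ^ (k+1) + s) + b = a * r * 2 ^ (k+1) + (a * s + b) := by ring
        rw [h2, ht, hpow]; ring
      rw [hval, Nat.mul_div_cancel _ (by norm_num)]
      omega

theorem etaab_add (a b n p q : ℕ) (hpar : a % 2 = b % 2) :
    etaab a b n (p * 2 ^ n + q) = etaab a b n q := by
  unfold etaab
  congr 1
  apply Finset.filter_congr
  intro i hi
  simp only [Finset.mem_range] at hi
  obtain ⟨r, hr⟩ := fab'_iter_key a b hpar p q n i hi.le
  rw [hr]
  have h2 : Even (r * 2 ^ (n - i)) := by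
    refine Even.mul_left ?_ r
    exact (Nat.even_pow).mpr ⟨even_two, by omega⟩
  simp [Nat.add_comm, Nat.odd_add, h2]
end

section
/- Let a, d be natural numbers with d ≥ 1. Consider the labeled transition relation on states {0,…,d−1} with transitions i →(b/c) j whenever a·b + i = c + d·j, for digits b, c in {0,…,d−1} (multiplication transducer in base d). Then for all natural numbers i, j and all equal-length digit strings u = b_0…b_{n−1}, v = c_0…c_{n−1} over {0,…,d−1}, there is a path labeled u/v from state i to state j if and only if [u]·a + i = [v] + j·d^n, where [w] denotes the value of w as a reverse base-d representation (least significant digit first), i.e., [w_0…w_{n−1}] = Σ w_k·d^k. -/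
/-- Path of the multiplication-by-`a` transducer in base `d`:
`MulPath a d i u v j` iff there is a path from state `i` to state `j`
with input word `u` and output word `v`, using transitions
`i →(b/c) k` whenever `a * b + i = c + d * k`. -/
def MulPath (a d : ℕ) : ℕ → List ℕ → List ℕ → ℕ → Prop
  | i, [], [], j => i = j
  | i, b :: u, c :: v, j => ∃ k, a * b + i = c + d * k ∧ MulPath a d k u v j
  | _, _, _, _ => False

/-- Reverse base-`d` value (least significant digit first). -/
def revVal (d : ℕ) : List ℕ → ℕ
  | [] => 0
  | c :: w => c + d * revVal d w

theorem mulPath_iff (a d : ℕ) (hd : 1 ≤ d) (i j : ℕ) (u v : List ℕ)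
    (hu : ∀ x ∈ u, x < d) (hv : ∀ x ∈ v, x < d) (hlen : u.length = v.length) :
    MulPath a d i u v j ↔ revVal d u * a + i = revVal d v + j * d ^ u.length := by
  induction u generalizing v i with
  | nil =>
    cases v with
    | nil => simp [MulPath, revVal]
    | cons c w => simp at hlen
  | cons b u ih =>
    cases v with
    | nil => simp at hlen
    | cons c v =>
      have hb : b < d := hu b (by simp)
      have hc : c < d := hv c (by simp)
      have hu' : ∀ x ∈ u, x < d := fun x hx => hu x (by simp [hx])
      have hv' : ∀ x ∈ v, x < d := fun x hx => hv x (by simp [hx])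
      have hlen' : u.length = v.length := by simpa using hlen
      constructor
      · rintro ⟨k, hk, hp⟩
        have hih := (ih k v hu' hv' hlen').mp hp
        have hk' : (a : ℤ) * b + i = c + d * k := by exact_mod_cast hk
        have hih' : (revVal d u : ℤ) * a + k = revVal d v + j * d ^ u.length := by
          exact_mod_cast hih
        have : ((b + d * revVal d u : ℕ) * a + i : ℤ)
            = (c + d * revVal d v : ℕ) + j * d ^ (u.length + 1) := by
          push_cast
          linear_combination hk' + (d : ℤ) * hih'
        simp only [revVal, List.length_cons]
        exact_mod_cast this
      · intro h
        have h' : ((b + d * revVal d u) * a + i : ℤ)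
            = (c + d * revVal d v) + j * d ^ (u.length + 1) := by
          have := h
          simp only [revVal, List.length_cons] at this
          exact_mod_cast this
        set K : ℤ := revVal d v + j * d ^ u.length - a * revVal d u with hK
        have hkeq : (a : ℤ) * b + i = c + d * K := by
          rw [hK]; push_cast; linear_combination h'
        have hKnn : 0 ≤ K := by
          by_contra hneg
          push_neg at hneg
          have h1 : (d : ℤ) * K ≤ -d := by
            have : K ≤ -1 := by omega
            nlinarith [Int.ofNat_le.mpr hd]
          have h2 : (0 : ℤ) ≤ (a : ℤ) * b + i := by positivity
          have h3 : (c : ℤ) < d := by exact_mod_cast hc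
          omega
        refine ⟨K.toNat, ?_, ?_⟩
        · have : (a * b + i : ℤ) = (c + d * K.toNat : ℤ) := by
            rw [Int.toNat_of_nonneg hKnn]; push_cast; linarith [hkeq]
          exact_mod_cast this
        · apply (ih K.toNat v hu' hv' hlen').mpr
          have : (revVal d u * a + K.toNat : ℤ) = (revVal d v + j * d ^ u.length : ℤ) := by
            rw [Int.toNat_of_nonneg hKnn, hK]; push_cast; ring
          exact_mod_cast this
end

section
/- Let a ≥ 2 and d, d' ≥ 1. For the division-by-d transducer in base a (transitions i →(b/c) j iff i·a + b = c·d + j, with i, j ∈ {0,…,d−1}, b, c ∈ {0,…,a−1}) and the division-by-d' transducer in base a, their composition — which has a transition (i,i') →(b/c) (j,j') iff there exists a digit e ∈ {0,…,a−1} with i·a + b = e·d + j and i'·a + e = c·d' + j' — is isomorphic to the division-by-(d·d') transducer in base a via the state encoding (i,i') ↦ i + i'·d. That is, (i,i') →(b/c) (j,j') in the composition if and only if (i + i'·d) →(b/c) (j + j'·d) in the division-by-(d·d') transducer. -/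
theorem comp_div_transducer_iso (a d d' : ℕ) (ha : 2 ≤ a) (hd : 1 ≤ d) (hd' : 1 ≤ d')
    (i i' j j' b c : ℕ) (hi : i < d) (hj : j < d) (hi' : i' < d') (hj' : j' < d')
    (hb : b < a) (hc : c < a) :
    (∃ e, e < a ∧ i * a + b = e * d + j ∧ i' * a + e = c * d' + j') ↔
      (i + i' * d) * a + b = c * (d * d') + (j + j' * d) := by
  constructor
  · rintro ⟨e, he, h1, h2⟩
    zify at h1 h2 ⊢
    linear_combination h1 + (d : ℤ) * h2
  · intro h
    zify at h
    set E : ℤ := c * d' + j' - i' * a with hE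
    have hEd : E * d = i * a + b - j := by rw [hE]; linear_combination -h
    have hd0 : (0:ℤ) < d := by exact_mod_cast hd
    have hE0 : 0 ≤ E := by
      by_contra hneg
      push_neg at hneg
      have : E ≤ -1 := by omega
      nlinarith [(show (0:ℤ) ≤ i * a by positivity), (show (0:ℤ) ≤ b by positivity),
        (show (j:ℤ) < d by exact_mod_cast hj)]
    have hEa : E < a := by
      by_contra hge
      push_neg at hge
      nlinarith [(show (i:ℤ) + 1 ≤ d by exact_mod_cast hi),
        (show (b:ℤ) + 1 ≤ a by exact_mod_cast hb), (show (0:ℤ) ≤ j by positivity)]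
    have hEn : ((E.toNat : ℤ)) = E := Int.toNat_of_nonneg hE0
    refine ⟨E.toNat, ?_, ?_, ?_⟩
    · rw [← hEn] at hEa; exact_mod_cast hEa
    · zify
      rw [hEn]
      linarith [hEd]
    · zify
      rw [hEn, hE]
      ring
end

section
/- Let a ≥ 2, d, d' ≥ 1, and let i, i', j, j', b, c satisfy 0 ≤ i, j < d, 0 ≤ i', j' < d', 0 ≤ b, c < a. Then the following are equivalent: (1) there exists a digit e with 0 ≤ e < a such that i·a + b = e·d + j and i'·a + e = c·d' + j'; (2) (i + i'·d)·a + b = c·(d·d') + (j + j'·d). -/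
theorem comp_div_step_iff (a d d' : ℕ) (ha : 2 ≤ a) (hd : 1 ≤ d) (hd' : 1 ≤ d')
    (i i' j j' b c : ℕ) (hi : i < d) (hj : j < d) (hi' : i' < d') (hj' : j' < d')
    (hb : b < a) (hc : c < a) :
    (∃ e, e < a ∧ i * a + b = e * d + j ∧ i' * a + e = c * d' + j') ↔
      (i + i' * d) * a + b = c * (d * d') + (j + j' * d) := by
  constructor
  · rintro ⟨e, he, h1, h2⟩
    zify at h1 h2 ⊢
    linear_combination h1 + d * h2
  · intro h
    -- key bound: i' * a ≤ c * d' + j'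
    have hib : i * a + b < d * a := by nlinarith
    have hkey : i' * a ≤ c * d' + j' := by
      by_contra hlt
      push_neg at hlt
      have : c * d' + j' + 1 ≤ i' * a := hlt
      have h2 : (c * d' + j' + 1) * d ≤ i' * a * d := Nat.mul_le_mul_right d this
      nlinarith [h, hj]
    refine ⟨c * d' + j' - i' * a, ?_, ?_, by omega⟩
    · have h1 : i * a + b = (c * d' + j' - i' * a) * d + j := by
        zify [hkey] at *
        linear_combination h
      nlinarith [h1, hi, hb, hj, Nat.sub_le (c * d' + j') (i' * a)]
    · zify [hkey] at *
      linear_combination h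
end

section
/- For the Collatz function f(n) = n/2 if n even, 3n+1 if n odd: for all natural numbers n, p, q, f^n(p·2^n + q) = p·6^{μ(q)} + f^n(q) and μ(p·2^n + q) = μ(q), where μ(q) = μ_n(q) is the number of indices 0 ≤ i < n such that f^i(q) is odd. -/
/-! Since `2 * r + q` and `q` have the same parity, one Collatz step sends `2 * r + q` to
`c * r + collatz q` with `c = 6` for odd `q` and `c = 1` for even `q`. Hence one step turns
`p * 2 ^ (n + 1) + q` into `(c * p) * 2 ^ n + collatz q`, and induction on `n` accumulates
one factor `6` per odd iterate of `q`. -/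

/-- The Collatz function: `m / 2` if `m` even, `3 * m + 1` if odd. -/
def collatz : ℕ → ℕ := fun m => if Even m then m / 2 else 3 * m + 1

/-- `μ n q` counts indices `i < n` with `collatz^[i] q` odd. -/
def muCollatz (n q : ℕ) : ℕ :=
  ((Finset.range n).filter (fun i => Odd (collatz^[i] q))).card

lemma muCollatz_succ (n q : ℕ) :
    muCollatz (n + 1) q = (if Odd q then 1 else 0) + muCollatz n (collatz q) := by
  rw [muCollatz, muCollatz, Finset.card_filter, Finset.card_filter, Finset.sum_range_succ',
    add_comm]
  simp only [Function.iterate_succ_apply, Function.iterate_zero_apply]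
  rfl

lemma odd_two_mul_add_iff (r q : ℕ) : Odd (2 * r + q) ↔ Odd q := by
  simp [Nat.odd_add']

lemma collatz_two_mul_add (r q : ℕ) :
    collatz (2 * r + q) = 6 ^ (if Odd q then 1 else 0) * r + collatz q := by
  rcases Nat.even_or_odd q with hq | hq
  · rw [collatz, collatz, if_pos ((even_two_mul r).add hq), if_pos hq,
      if_neg (Nat.not_odd_iff_even.mpr hq)]
    omega
  · rw [collatz, collatz, if_neg (Nat.not_even_iff_odd.mpr ((odd_two_mul_add_iff r q).mpr hq)),
      if_neg (Nat.not_even_iff_odd.mpr hq), if_pos hq]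
    ring

theorem collatz_iterate_add (n p q : ℕ) :
    collatz^[n] (p * 2 ^ n + q) = p * 6 ^ (muCollatz n q) + collatz^[n] q ∧
    muCollatz n (p * 2 ^ n + q) = muCollatz n q := by
  induction n generalizing p q with
  | zero => simp [muCollatz]
  | succ n ih =>
    have hsplit : p * 2 ^ (n + 1) + q = 2 * (p * 2 ^ n) + q := by ring
    obtain ⟨hiter, hmu⟩ := ih (6 ^ (if Odd q then 1 else 0) * p) (collatz q)
    rw [mul_assoc, ← collatz_two_mul_add, ← hsplit] at hiter hmu
    rw [Function.iterate_succ_apply, Function.iterate_succ_apply, hiter, muCollatz_succ,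
      muCollatz_succ, hmu, hsplit]
    simp only [odd_two_mul_add_iff, pow_add, and_true]
    ring
end

section
/- Let 0 ≤ b < a with a ≡ b (mod 2) and a > 1. For all n ≥ 0, 0 ≤ i < 2^n, and 0 ≤ c < a: the transition i →((a+b)/2 / c) j in the division-by-2^n transducer in base a (i.e., i·a + (a+b)/2 = c·2^n + j with 0 ≤ j < 2^n) holds if and only if the transition 2i+1 →(b/c) 2j in the division-by-2^{n+1} transducer in base a (i.e., (2i+1)·a + b = c·2^{n+1} + 2j) holds. -/
theorem div_pow_two_step_iff (a b : ℕ) (ha : 1 < a) (hb : b < a)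
    (hpar : a % 2 = b % 2) (n : ℕ) (i : ℕ) (hi : i < 2 ^ n) (c : ℕ) (hc : c < a)
    (j : ℕ) :
    (j < 2 ^ n ∧ i * a + (a + b) / 2 = c * 2 ^ n + j) ↔
      (2 * j < 2 ^ (n + 1) ∧ (2 * i + 1) * a + b = c * 2 ^ (n + 1) + 2 * j) := by
  have h1 : (2 * i + 1) * a = 2 * (i * a) + a := by ring
  have h2 : (2 : ℕ) ^ (n + 1) = 2 * 2 ^ n := by ring
  have h3 : c * 2 ^ (n + 1) = 2 * (c * 2 ^ n) := by ring
  rw [h1, h3, h2]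
  omega
end
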